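/- Let A be a finite nonempty set, let f, Q, e : A → ℝ, and let η > 0. Let π = softmax(f) and π' = softmax(f + e + ηQ). Then for any probability distribution p on A, Σ_{a∈A} Q(a) (p(a) − π(a)) ≤ (1/η)[KL(p, π) − KL(p, π')] + (η/2)·(max_{a∈A} |Q(a)|)² + (2/η)·max_{a∈A} |e(a)|. -/

import Mathlib

/-!
Since `log π' - log π = e + ηQ - log (Z' / Z)` and `Z' / Z = E_π[exp (e + ηQ)]`, the drop
in divergence `KL(p, π) - KL(p, π')` equals `⟨p, e + ηQ⟩ - log E_π[exp (e + ηQ)]`. Pulling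
out `exp (max |e|)` and applying Hoeffding's lemma to `Q ∈ [-M, M]` under `π` bounds the
log-moment by `max |e| + η ⟨π, Q⟩ + η² M² / 2`, and `⟨p, e⟩ ≥ -max |e|` costs the second
`max |e|`.
-/

/-- The soft-max distribution on a finite nonempty set associated with a score function `f`. -/
noncomputable def softmax {A : Type*} [Fintype A] (f : A → ℝ) : A → ℝ :=
  fun a => Real.exp (f a) / ∑ a', Real.exp (f a')

/-- The Kullback–Leibler divergence between two distributions on a finite set,
with the convention `0 · log 0 = 0` (note `Real.log 0 = 0` in Mathlib). -/
noncomputable def klDiv {A : Type*} [Fintype A] (p q : A → ℝ) : ℝ :=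
  ∑ a, p a * Real.log (p a / q a)

open Real Finset MeasureTheory ProbabilityTheory

section WeightedExp

variable {ι : Type*} [Fintype ι] {w X : ι → ℝ}

lemma sum_mul_exp_pos (hw0 : ∀ i, 0 ≤ w i) (hw1 : ∑ i, w i = 1) (g : ι → ℝ) :
    0 < ∑ i, w i * exp (g i) := by
  obtain ⟨i, hi⟩ : ∃ i, 0 < w i := by
    by_contra! h
    linarith [sum_nonpos (s := univ) fun i _ ↦ h i]
  exact sum_pos' (fun i _ ↦ mul_nonneg (hw0 i) (exp_pos _).le)
    ⟨i, mem_univ i, mul_pos hi (exp_pos _)⟩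

lemma integral_sum_smul_dirac (hw : ∀ i, 0 ≤ w i) (g : ℝ → ℝ) :
    ∫ x, g x ∂(∑ i, ENNReal.ofReal (w i) • Measure.dirac (X i)) = ∑ i, w i * g (X i) := by
  rw [integral_finsetSum_measure fun i _ ↦ (integrable_dirac (by simp)).smul_measure (by simp)]
  simp [hw]

lemma isProbabilityMeasure_sum_smul_dirac (hw0 : ∀ i, 0 ≤ w i) (hw1 : ∑ i, w i = 1) :
    IsProbabilityMeasure (∑ i, ENNReal.ofReal (w i) • Measure.dirac (X i)) := by
  constructor
  simp [← ENNReal.ofReal_sum_of_nonneg fun i _ ↦ hw0 i, hw1]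

/-- Hoeffding's lemma for weights `w`, applied to the law `∑ i, w i • δ (X i)` on `ℝ`. -/
lemma log_sum_mul_exp_le_of_mem_Icc (hw0 : ∀ i, 0 ≤ w i) (hw1 : ∑ i, w i = 1) {a b : ℝ}
    (hX : ∀ i, X i ∈ Set.Icc a b) (t : ℝ) :
    log (∑ i, w i * exp (t * X i)) ≤ t * ∑ i, w i * X i + ((b - a) / 2) ^ 2 * t ^ 2 / 2 := by
  set μ : Measure ℝ := ∑ i, ENNReal.ofReal (w i) • Measure.dirac (X i)
  have := isProbabilityMeasure_sum_smul_dirac (X := X) hw0 hw1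
  have hμ : ∀ᵐ x ∂μ, id x ∈ Set.Icc a b := by
    rw [ae_iff]
    simpa [μ] using fun i ↦ Or.inr (hX i)
  have hcgf := (hasSubgaussianMGF_of_mem_Icc aemeasurable_id hμ).cgf_le t
  have hmean : μ[id] = ∑ i, w i * X i := integral_sum_smul_dirac hw0 id
  have hc : (((‖b - a‖₊ / 2) ^ 2 : NNReal) : ℝ) = ((b - a) / 2) ^ 2 := by
    push_cast
    rw [Real.norm_eq_abs, div_pow, sq_abs, div_pow]
  rw [cgf, mgf, hmean, integral_sum_smul_dirac hw0, hc] at hcgf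
  dsimp only [id] at hcgf
  set m := ∑ i, w i * X i
  calc log (∑ i, w i * exp (t * X i))
      = log (exp (t * m) * ∑ i, w i * exp (t * (X i - m))) := by
        rw [mul_sum]
        congr! 2 with i
        rw [mul_left_comm, ← exp_add]
        ring_nf
    _ = t * m + log (∑ i, w i * exp (t * (X i - m))) := by
        rw [log_mul (exp_ne_zero _) (sum_mul_exp_pos hw0 hw1 _).ne', log_exp]
    _ ≤ _ := by linarith

lemma log_sum_mul_exp_add_le (hw0 : ∀ i, 0 ≤ w i) (hw1 : ∑ i, w i = 1) {e Q : ι → ℝ}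
    {E M : ℝ} (he : ∀ i, e i ≤ E) (hQ : ∀ i, |Q i| ≤ M) (t : ℝ) :
    log (∑ i, w i * exp (e i + t * Q i)) ≤ E + t * ∑ i, w i * Q i + t ^ 2 * M ^ 2 / 2 := by
  have hoeffding := log_sum_mul_exp_le_of_mem_Icc hw0 hw1 (fun i ↦ abs_le.mp (hQ i)) t
  calc log (∑ i, w i * exp (e i + t * Q i))
      ≤ log (exp E * ∑ i, w i * exp (t * Q i)) := by
        refine log_le_log (sum_mul_exp_pos hw0 hw1 _) ?_
        rw [mul_sum]
        refine sum_le_sum fun i _ ↦ ?_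
        rw [exp_add, mul_left_comm]
        exact mul_le_mul_of_nonneg_right (exp_le_exp.2 (he i)) (mul_nonneg (hw0 i) (exp_pos _).le)
    _ = E + log (∑ i, w i * exp (t * Q i)) := by
        rw [log_mul (exp_ne_zero _) (sum_mul_exp_pos hw0 hw1 _).ne', log_exp]
    _ ≤ E + t * ∑ i, w i * Q i + t ^ 2 * M ^ 2 / 2 := by linarith

end WeightedExp

section Softmax

variable {A : Type*} [Fintype A]

lemma sum_exp_pos [Nonempty A] (f : A → ℝ) : 0 < ∑ a, exp (f a) :=
  sum_pos (fun _ _ ↦ exp_pos _) univ_nonempty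

lemma softmax_pos [Nonempty A] (f : A → ℝ) (a : A) : 0 < softmax f a :=
  div_pos (exp_pos _) (sum_exp_pos f)

lemma sum_softmax [Nonempty A] (f : A → ℝ) : ∑ a, softmax f a = 1 := by
  simp only [softmax]
  rw [← sum_div, div_self (sum_exp_pos f).ne']

lemma log_softmax [Nonempty A] (f : A → ℝ) (a : A) :
    log (softmax f a) = f a - log (∑ a', exp (f a')) := by
  simp only [softmax]
  rw [log_div (exp_ne_zero _) (sum_exp_pos f).ne', log_exp]

lemma sum_softmax_mul_exp_sub [Nonempty A] (f g : A → ℝ) :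
    ∑ a, softmax f a * exp (g a - f a) = (∑ a, exp (g a)) / ∑ a, exp (f a) := by
  simp only [softmax, sum_div, div_mul_eq_mul_div, ← exp_add, add_sub_cancel]

lemma klDiv_sub_klDiv {p q q' : A → ℝ} (hq : ∀ a, q a ≠ 0) (hq' : ∀ a, q' a ≠ 0) :
    klDiv p q - klDiv p q' = ∑ a, p a * (log (q' a) - log (q a)) := by
  rw [klDiv, klDiv, ← sum_sub_distrib]
  refine sum_congr rfl fun a _ ↦ ?_
  rcases eq_or_ne (p a) 0 with hpa | hpa
  · simp [hpa]
  · rw [log_div hpa (hq a), log_div hpa (hq' a)]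
    ring

lemma klDiv_softmax_sub_klDiv_softmax [Nonempty A] {p : A → ℝ} (hp : ∑ a, p a = 1)
    (f g : A → ℝ) :
    klDiv p (softmax f) - klDiv p (softmax g)
      = ∑ a, p a * (g a - f a) - log (∑ a, softmax f a * exp (g a - f a)) := by
  rw [klDiv_sub_klDiv (fun a ↦ (softmax_pos f a).ne') (fun a ↦ (softmax_pos g a).ne'),
    sum_softmax_mul_exp_sub, log_div (sum_exp_pos g).ne' (sum_exp_pos f).ne']
  simp only [log_softmax, mul_sub, sum_sub_distrib, ← sum_mul, hp, one_mul]
  ring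

end Softmax

/-- One-step mirror-descent inequality for soft-max policies: with `π = softmax f`,
`π' = softmax (f + e + η Q)`, `η > 0`, and any probability distribution `p` on `A`,
`Σₐ Q(a)(p(a) − π(a)) ≤ (1/η)[KL(p,π) − KL(p,π')] + (η/2)(maxₐ|Q(a)|)² + (2/η) maxₐ|e(a)|`. -/
theorem stmt_6 {A : Type*} [Fintype A] [Nonempty A] (f Q e : A → ℝ) (η : ℝ) (hη : 0 < η)
    (p : A → ℝ) (hp0 : ∀ a, 0 ≤ p a) (hp1 : ∑ a, p a = 1) :
    ∑ a, Q a * (p a - softmax f a)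
      ≤ 1 / η * (klDiv p (softmax f) - klDiv p (softmax (fun a => f a + e a + η * Q a)))
        + η / 2 * (Finset.univ.sup' Finset.univ_nonempty fun a => |Q a|) ^ 2
        + 2 / η * (Finset.univ.sup' Finset.univ_nonempty fun a => |e a|) := by
  set M := univ.sup' univ_nonempty fun a => |Q a|
  set E := univ.sup' univ_nonempty fun a => |e a|
  have hQ (a : A) : |Q a| ≤ M := le_sup' (fun a => |Q a|) (mem_univ a)
  have he (a : A) : |e a| ≤ E := le_sup' (fun a => |e a|) (mem_univ a)
  have hKL := klDiv_softmax_sub_klDiv_softmax hp1 f (fun a => f a + e a + η * Q a)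
  set D := klDiv p (softmax f) - klDiv p (softmax (fun a => f a + e a + η * Q a))
  have hshift (a : A) : f a + e a + η * Q a - f a = e a + η * Q a := by ring
  simp only [hshift, mul_add, sum_add_distrib, mul_left_comm (p _) η, ← mul_sum] at hKL
  have hlog := log_sum_mul_exp_add_le (fun a ↦ (softmax_pos f a).le) (sum_softmax f)
    (fun a ↦ (le_abs_self _).trans (he a)) hQ η
  have hpe : -E ≤ ∑ a, p a * e a :=
    calc -E = ∑ a, p a * -E := by rw [← sum_mul, hp1, one_mul]
      _ ≤ ∑ a, p a * e a :=
        sum_le_sum fun a _ ↦ mul_le_mul_of_nonneg_left (neg_le_of_abs_le (he a)) (hp0 a)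
  have hgap : ∑ a, Q a * (p a - softmax f a) = ∑ a, p a * Q a - ∑ a, softmax f a * Q a := by
    rw [← sum_sub_distrib]
    exact sum_congr rfl fun a _ ↦ by ring
  have key : η * ∑ a, Q a * (p a - softmax f a) ≤ D + η ^ 2 * M ^ 2 / 2 + 2 * E := by
    rw [hgap]
    linarith
  calc ∑ a, Q a * (p a - softmax f a) = 1 / η * (η * ∑ a, Q a * (p a - softmax f a)) := by
        field_simp
    _ ≤ 1 / η * (D + η ^ 2 * M ^ 2 / 2 + 2 * E) := by gcongr
    _ = 1 / η * D + η / 2 * M ^ 2 + 2 / η * E := by field_simp
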